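/- arXiv:1108.0845 — 4 statements merged into one kernel-verified Lean document; each statement's English description precedes it below -/
import Mathlib

section
/- Let S be a group written additively (operation ⊕, inverse −, identity 0, not necessarily commutative) with a map ω : S → ℝ ∪ {∞} satisfying (1) ω(x) = ∞ iff x = 0 and (3) ω(−x) = ω(x) and ω(x ⊕ y) ≥ min(ω(x), ω(y)), and let d(x,y) := 2^{−ω(x ⊕ (−y))} be the induced ultrametric on S. Let T′ be a subgroup of S with T′ ≠ S. If the metric subspace (T′, d|_{T′×T′}) satisfies (MC′), then there exists an independent element in S, i.e., an element x ≠ 0 with ω(x ⊕ y) = min(ω(x), ω(y)) for all y ∈ T′. -/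
/-- The ultrametric induced on `S` by the valuation-like map `ω`,
with the convention `2 ^ (-∞) = 0`. -/
noncomputable def dOf {S : Type*} [AddGroup S] (ω : S → WithTop ℝ) (x y : S) : ℝ :=
  WithTop.recTopCoe 0 (fun r : ℝ => (2 : ℝ) ^ (-r)) (ω (x + -y))

/-- Property (MC′) for the metric subspace on `A ⊆ X` induced by a distance function `d`:
every nested sequence of c-balls (closed balls of positive radius, with centers in `A`
and taken inside `A`) has nonempty intersection. -/
def MCprimeOn {X : Type*} (d : X → X → ℝ) (A : Set X) : Prop :=
  ∀ (c : ℕ → X) (r : ℕ → ℝ),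
    (∀ n, c n ∈ A) → (∀ n, 0 < r n) →
    (∀ n, {y ∈ A | d (c (n + 1)) y ≤ r (n + 1)} ⊆ {y ∈ A | d (c n) y ≤ r n}) →
    (⋂ n, {y ∈ A | d (c n) y ≤ r n}).Nonempty

/-!
Pick `x ∉ T'` and let `δ` be the distance from `x` to `T'`. Points `tₙ ∈ T'` with
`d(x, tₙ) < δ + 1/(n+1)` are the centres of a nested sequence of c-balls of `T'` (by the
ultrametric inequality), so (MC′) yields `y ∈ T'` with `d(x, y) = δ`. Then `z = x - y ≠ 0`
satisfies `ω (z + w) ≤ ω z` for every `w ∈ T'`, and the ultrametric inequality upgrades this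
to `ω (z + w) = min (ω z) (ω w)`.
-/

noncomputable def twoPowNeg : WithTop ℝ → ℝ :=
  WithTop.recTopCoe 0 fun r : ℝ => (2 : ℝ) ^ (-r)

lemma twoPowNeg_nonneg (a : WithTop ℝ) : 0 ≤ twoPowNeg a := by
  induction a using WithTop.recTopCoe with
  | top => simp [twoPowNeg]
  | coe r => exact (Real.rpow_pos_of_pos two_pos (-r)).le

lemma twoPowNeg_strictAnti : StrictAnti twoPowNeg := by
  intro a b hab
  induction b using WithTop.recTopCoe with
  | top =>
    lift a to ℝ using hab.ne
    exact Real.rpow_pos_of_pos two_pos (-a)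
  | coe r =>
    lift a to ℝ using (hab.trans (WithTop.coe_lt_top r)).ne
    exact Real.rpow_lt_rpow_of_exponent_lt one_lt_two (neg_lt_neg (WithTop.coe_lt_coe.mp hab))

lemma dOf_eq {S : Type*} [AddGroup S] (ω : S → WithTop ℝ) (x y : S) :
    dOf ω x y = twoPowNeg (ω (x + -y)) :=
  rfl

section Ultrametric

variable {X : Type*} {d : X → X → ℝ}

lemma ultra_closedBall_subset (hsymm : ∀ a b, d a b = d b a)
    (hultra : ∀ a b c, d a c ≤ max (d a b) (d b c)) {x c c' y : X} {r r' : ℝ}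
    (hc : d x c ≤ r) (hc' : d x c' ≤ r') (hr : r' ≤ r) (hy : d c' y ≤ r') : d c y ≤ r :=
  calc d c y ≤ max (d c x) (d x y) := hultra c x y
    _ ≤ r := max_le (hsymm c x ▸ hc) ((hultra x c' y).trans (max_le hc' hy) |>.trans hr)

theorem MCprimeOn.exists_isMinOn (hnonneg : ∀ a b, 0 ≤ d a b) (hsymm : ∀ a b, d a b = d b a)
    (hultra : ∀ a b c, d a c ≤ max (d a b) (d b c)) {A : Set X} (hA : A.Nonempty)
    (hMC : MCprimeOn d A) (x : X) : ∃ y ∈ A, IsMinOn (d x) A y := by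
  set δ := sInf (d x '' A)
  have hδ_le : ∀ u ∈ A, δ ≤ d x u := fun u hu =>
    csInf_le ⟨0, by rintro _ ⟨v, -, rfl⟩; exact hnonneg x v⟩ ⟨u, hu, rfl⟩
  set r : ℕ → ℝ := fun n => δ + 1 / (n + 1)
  have hδ_nonneg : 0 ≤ δ :=
    le_csInf (hA.image _) (by rintro _ ⟨v, -, rfl⟩; exact hnonneg x v)
  have hr_pos : ∀ n, 0 < r n := fun _ =>
    add_pos_of_nonneg_of_pos hδ_nonneg Nat.one_div_pos_of_nat
  have hr_succ : ∀ n, r (n + 1) ≤ r n := fun n => by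
    simpa [r] using Nat.one_div_le_one_div (α := ℝ) n.le_succ
  have hcentres : ∀ n, ∃ t ∈ A, d x t < r n := fun n => by
    obtain ⟨_, ⟨t, ht, rfl⟩, hlt⟩ :=
      Real.lt_sInf_add_pos (hA.image (d x)) Nat.one_div_pos_of_nat
    exact ⟨t, ht, hlt⟩
  choose t htA ht using hcentres
  obtain ⟨y, hy⟩ := hMC t r htA hr_pos fun n z ⟨hzA, hz⟩ =>
    ⟨hzA, ultra_closedBall_subset hsymm hultra (ht n).le (ht (n + 1)).le (hr_succ n) hz⟩
  simp only [Set.mem_iInter, Set.mem_ofPred_eq] at hy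
  have hxy : ∀ n : ℕ, d x y ≤ δ + 1 / (n + 1) := fun n =>
    (hultra x (t n) y).trans (max_le (ht n).le (hy n).2)
  have hxy_δ : d x y ≤ δ := le_of_forall_pos_le_add fun ε hε => by
    obtain ⟨n, hn⟩ := exists_nat_one_div_lt hε
    linarith [hxy n]
  exact ⟨y, (hy 0).1, fun u hu => hxy_δ.trans (hδ_le u hu)⟩

end Ultrametric

section Valuation

variable {S : Type*} [AddGroup S] {ω : S → WithTop ℝ}

lemma dOf_comm (hneg : ∀ x, ω (-x) = ω x) (x y : S) : dOf ω x y = dOf ω y x := by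
  rw [dOf_eq, dOf_eq, ← hneg, neg_add_rev, neg_neg]

lemma dOf_le_max (hadd : ∀ x y, min (ω x) (ω y) ≤ ω (x + y)) (x y z : S) :
    dOf ω x z ≤ max (dOf ω x y) (dOf ω y z) := by
  have h := hadd (x + -y) (y + -z)
  rw [add_assoc, neg_add_cancel_left] at h
  simp only [dOf_eq, ← twoPowNeg_strictAnti.antitone.map_min]
  exact twoPowNeg_strictAnti.antitone h

lemma add_eq_min_of_le (hneg : ∀ x, ω (-x) = ω x)
    (hadd : ∀ x y, min (ω x) (ω y) ≤ ω (x + y)) {z w : S}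
    (h : ω (z + w) ≤ ω z) : ω (z + w) = min (ω z) (ω w) := by
  have hw : min (ω z) (ω (z + w)) ≤ ω w := by
    simpa only [neg_add_cancel_left, hneg] using hadd (-z) (z + w)
  rw [min_eq_right h] at hw
  exact le_antisymm (le_min h hw) (hadd z w)

end Valuation

theorem exists_independent_general {S : Type*} [AddGroup S] (ω : S → WithTop ℝ)
    (hω3neg : ∀ x : S, ω (-x) = ω x)
    (hω3 : ∀ x y : S, min (ω x) (ω y) ≤ ω (x + y))
    (T' : AddSubgroup S) (hT' : T' ≠ ⊤)
    (hMC : MCprimeOn (dOf ω) (T' : Set S)) :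
    ∃ x : S, x ≠ 0 ∧ ∀ y ∈ T', ω (x + y) = min (ω x) (ω y) := by
  obtain ⟨x, hx⟩ : ∃ x, x ∉ T' := by
    simpa [AddSubgroup.eq_top_iff'] using hT'
  obtain ⟨y, hyT, hy⟩ := hMC.exists_isMinOn (fun _ _ => twoPowNeg_nonneg _) (dOf_comm hω3neg)
    (dOf_le_max hω3) ⟨0, T'.zero_mem⟩ x
  refine ⟨x + -y, fun h => hx (add_neg_eq_zero.mp h ▸ hyT), fun w hw =>
    add_eq_min_of_le hω3neg hω3 ?_⟩
  have hle : dOf ω x y ≤ dOf ω x (-w + y) := hy (T'.add_mem (T'.neg_mem hw) hyT)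
  rw [dOf_eq, dOf_eq, neg_add_rev, neg_neg, ← add_assoc] at hle
  exact twoPowNeg_strictAnti.le_iff_ge.mp hle

/-- If `T′` is a proper subgroup of `S` and the metric subspace
`(T′, d|_{T′×T′})` satisfies (MC′), then there exists an independent element in `S`. -/
theorem exists_independent {S : Type*} [AddGroup S] (ω : S → WithTop ℝ)
    (hω1 : ∀ x : S, ω x = ⊤ ↔ x = 0)
    (hω3neg : ∀ x : S, ω (-x) = ω x)
    (hω3 : ∀ x y : S, min (ω x) (ω y) ≤ ω (x + y))
    (T' : AddSubgroup S) (hT' : T' ≠ ⊤)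
    (hMC : MCprimeOn (dOf ω) (T' : Set S)) :
    ∃ x : S, x ≠ 0 ∧ ∀ y ∈ T', ω (x + y) = min (ω x) (ω y) :=
  exists_independent_general ω hω3neg hω3 T' hT' hMC
end

section
/- Let K be a field with a valuation ν whose residue characteristic is not 2 (i.e., char K ≠ 2 and ν(2) = 0), let F be a subfield of K, let V be a K-vector space, m > 0, and let ω : V → ℝ ∪ {∞} satisfy (1) ω(x) = ∞ iff x = 0, (2) ω(x·l) = ω(x) + m·ν(l), and (3) ω(−x) = ω(x) and ω(x + y) ≥ min(ω(x), ω(y)). Let σ : V → V be an F-linear map with σ ∘ σ = id and ω(σ(x)) = ω(x) for all x ∈ V, and set V_σ := {v ∈ V : σ(v) = v} and V′_σ := {v ∈ V : σ(v) = −v}. Then V is the direct sum of V_σ and V′_σ, and ω(v + v′) = min(ω(v), ω(v′)) for all v ∈ V_σ and v′ ∈ V′_σ (i.e., V_σ and V′_σ are ω-complements in V). -/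
/-- Let `K` be a field with a valuation `ν` of residue characteristic
different from 2 (i.e. `char K ≠ 2` and `ν 2 = 0`), `F` a subfield of `K`, `V` a `K`-vector
space with a valuation-like map `ω` satisfying (1)–(3), and `σ : V → V` an `F`-linear
involution preserving `ω`. Then `V` is the direct sum of `V_σ = {v | σ v = v}` and
`V′_σ = {v | σ v = -v}`, and these are `ω`-complements. -/
theorem fixed_spaces_omega_complements {K V : Type*} [Field K]
    [AddCommGroup V] [Module K V]
    (hchar : (2 : K) ≠ 0)
    (ν : K → WithTop ℝ)
    (hν1 : ∀ x : K, ν x = ⊤ ↔ x = 0)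
    (hνmul : ∀ x y : K, ν (x * y) = ν x + ν y)
    (hνadd : ∀ x y : K, min (ν x) (ν y) ≤ ν (x + y))
    (hν2 : ν (2 : K) = 0)
    (F : Subfield K)
    (m : ℝ) (hm : 0 < m)
    (ω : V → WithTop ℝ)
    (hω1 : ∀ x : V, ω x = ⊤ ↔ x = 0)
    (hω2 : ∀ (x : V) (l : K), ω (l • x) = ω x + (m : WithTop ℝ) * ν l)
    (hω3neg : ∀ x : V, ω (-x) = ω x)
    (hω3 : ∀ x y : V, min (ω x) (ω y) ≤ ω (x + y))
    (σ : V → V)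
    (hσadd : ∀ x y : V, σ (x + y) = σ x + σ y)
    (hσsmul : ∀ c : K, c ∈ F → ∀ x : V, σ (c • x) = c • σ x)
    (hσinv : ∀ x : V, σ (σ x) = x)
    (hσω : ∀ x : V, ω (σ x) = ω x) :
    (∀ x : V, ∃! p : V × V, σ p.1 = p.1 ∧ σ p.2 = -p.2 ∧ x = p.1 + p.2) ∧
      ∀ v v' : V, σ v = v → σ v' = -v' → ω (v + v') = min (ω v) (ω v') := by
  have h2F : (2 : K) ∈ F := by
    have : ((1 : K) + 1) ∈ F := F.add_mem F.one_mem F.one_mem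
    simpa [one_add_one_eq_two] using this
  have hinvF : ((2 : K)⁻¹) ∈ F := F.inv_mem h2F
  have hσ0 : σ 0 = 0 := by
    have h := hσadd 0 0
    rw [add_zero] at h
    exact (left_eq_add.mp h)
  have hσneg : ∀ x : V, σ (-x) = -σ x := by
    intro x
    have h := hσadd x (-x)
    rw [add_neg_cancel, hσ0] at h
    exact (eq_neg_of_add_eq_zero_right h.symm)
  constructor
  · intro x
    refine ⟨(((2 : K)⁻¹) • (x + σ x), ((2 : K)⁻¹) • (x - σ x)), ⟨?_, ?_, ?_⟩, ?_⟩
    · rw [hσsmul _ hinvF, hσadd, hσinv]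
      rw [add_comm]
    · rw [hσsmul _ hinvF, sub_eq_add_neg, hσadd, hσneg, hσinv, ← smul_neg]
      congr 1
      abel
    · rw [← smul_add]
      have : (x + σ x) + (x - σ x) = (2 : K) • x := by
        rw [two_smul]; abel
      rw [this, smul_smul, inv_mul_cancel₀ hchar, one_smul]
    · rintro ⟨a, b⟩ ⟨ha, hb, hab⟩
      dsimp at ha hb hab
      have hσx : σ x = a - b := by
        rw [hab, hσadd, ha, hb]; abel
      have ha' : a = ((2 : K)⁻¹) • (x + σ x) := by
        rw [hσx, hab]
        have : (a + b) + (a - b) = (2 : K) • a := by rw [two_smul]; abel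
        rw [this, smul_smul, inv_mul_cancel₀ hchar, one_smul]
      have hb' : b = ((2 : K)⁻¹) • (x - σ x) := by
        rw [hσx, hab]
        have : (a + b) - (a - b) = (2 : K) • b := by rw [two_smul]; abel
        rw [this, smul_smul, inv_mul_cancel₀ hchar, one_smul]
      exact Prod.ext ha' hb'
  · intro v v' hv hv'
    refine le_antisymm ?_ (hω3 v v')
    by_contra hlt
    push_neg at hlt
    have hsub : ω (v - v') = ω (v + v') := by
      have : σ (v + v') = v - v' := by rw [hσadd, hv, hv', sub_eq_add_neg]
      rw [← this, hσω]
    have hωv : ω v = ω ((2 : K) • v) := by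
      rw [hω2, hν2, mul_zero, add_zero]
    have hωv' : ω v' = ω ((2 : K) • v') := by
      rw [hω2, hν2, mul_zero, add_zero]
    have h2v : (2 : K) • v = (v + v') + (v - v') := by rw [two_smul]; abel
    have h2v' : (2 : K) • v' = (v + v') + (-(v - v')) := by rw [two_smul]; abel
    have hv_ge : ω (v + v') ≤ ω v := by
      rw [hωv, h2v]
      have := hω3 (v + v') (v - v')
      rwa [hsub, min_self] at this
    have hv'_ge : ω (v + v') ≤ ω v' := by
      rw [hωv', h2v']
      have := hω3 (v + v') (-(v - v'))
      rwa [hω3neg, hsub, min_self] at this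
    exact absurd (le_min hv_ge hv'_ge) (not_le_of_gt hlt)
end

section
/- Let (X, d) be a complete metric space whose metric satisfies the strong triangle inequality d(x,z) ≤ max(d(x,y), d(y,z)) for all x, y, z. Then the following are equivalent: (MC) every sequence of nested closed balls whose radii are bounded below by a strictly positive constant has nonempty intersection; (MC′) every sequence of nested closed balls (with positive radii) has nonempty intersection. -/
/-- In a complete ultrametric space, property (MC) (nested sequences of
closed balls with radii bounded below by a positive constant have nonempty intersection)
is equivalent to property (MC′) (all nested sequences of closed balls with positive radii
have nonempty intersection). -/
theorem MC_iff_MCprime_of_complete {X : Type*} [MetricSpace X] [CompleteSpace X]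
    (hultra : ∀ x y z : X, dist x z ≤ max (dist x y) (dist y z)) :
    (∀ (c : ℕ → X) (r : ℕ → ℝ) (ε : ℝ), 0 < ε → (∀ n, ε ≤ r n) →
        (∀ n, Metric.closedBall (c (n + 1)) (r (n + 1)) ⊆ Metric.closedBall (c n) (r n)) →
        (⋂ n, Metric.closedBall (c n) (r n)).Nonempty) ↔
      (∀ (c : ℕ → X) (r : ℕ → ℝ), (∀ n, 0 < r n) →
        (∀ n, Metric.closedBall (c (n + 1)) (r (n + 1)) ⊆ Metric.closedBall (c n) (r n)) →
        (⋂ n, Metric.closedBall (c n) (r n)).Nonempty) := by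
  constructor
  · intro hMC c r hr hnest
    by_cases hb : ∃ ε > 0, ∀ n, ε ≤ r n
    · obtain ⟨ε, hε, h⟩ := hb
      exact hMC c r ε hε h hnest
    · push_neg at hb
      have hsub : ∀ n m, n ≤ m →
          Metric.closedBall (c m) (r m) ⊆ Metric.closedBall (c n) (r n) := by
        intro n m hnm
        induction hnm with
        | refl => exact subset_rfl
        | step h ih => exact fun x hx => ih (hnest _ hx)
      have hd : ∀ n m, n ≤ m → dist (c m) (c n) ≤ r n := fun n m h =>
        hsub n m h (Metric.mem_closedBall_self (hr m).le)
      have hcauchy : CauchySeq c := by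
        rw [Metric.cauchySeq_iff]
        intro ε hε
        obtain ⟨N, hN⟩ := hb (ε / 2) (by positivity)
        refine ⟨N, fun m hm n hn => ?_⟩
        calc dist (c m) (c n) ≤ dist (c m) (c N) + dist (c N) (c n) := dist_triangle _ _ _
          _ = dist (c m) (c N) + dist (c n) (c N) := by rw [dist_comm (c N)]
          _ ≤ r N + r N := add_le_add (hd N m hm) (hd N n hn)
          _ < ε / 2 + ε / 2 := by linarith
          _ = ε := by ring
      obtain ⟨x, hx⟩ := cauchySeq_tendsto_of_complete hcauchy
      refine ⟨x, Set.mem_iInter.2 fun n => ?_⟩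
      refine Metric.isClosed_closedBall.mem_of_tendsto hx ?_
      filter_upwards [Filter.eventually_ge_atTop n] with m hm
      exact hsub n m hm (Metric.mem_closedBall_self (hr m).le)
  · intro h c r ε hε hr hnest
    exact h c r (fun n => lt_of_lt_of_le hε (hr n)) hnest
end

section
/- Let K be a field of characteristic 2, let σ be a ring endomorphism of K with σ(σ(x)) = x² for all x ∈ K (a Tits endomorphism), and let ν : K → ℝ ∪ {∞} be a valuation satisfying ν(σ(x)) = √2 · ν(x) for all x ∈ K. Define ω(t, u) := ν(σ(t)·t² + u·t + σ(u)) for (t,u) ∈ K × K. Then for all t, u ∈ K and every nonzero k ∈ K, ω(t·σ(k)·k^{−1}, u·k) = ω(t, u) + √2 · ν(k). -/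
/-! The polynomial `σ t · t² + u t + σ u` is semi-invariant: replacing `(t,u)` by `(t,u) ⊙ k`
multiplies it by `σ k`, because `σ (σ k) = k²`. Multiplicativity of `ν` and `ν ∘ σ = √2 · ν`
turn this factor into the summand `√2 · ν k`. -/

/-- The polynomial whose valuation is `ω (t, u)`. -/
def octagonPoly {K : Type*} [CommRing K] (σ : K →+* K) (t u : K) : K :=
  σ t * t ^ 2 + u * t + σ u

theorem octagonPoly_smul {K : Type*} [Field K] (σ : K →+* K)
    (hσ : ∀ x : K, σ (σ x) = x ^ 2) (t u : K) {k : K} (hk : k ≠ 0) :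
    octagonPoly σ (t * σ k * k⁻¹) (u * k) = octagonPoly σ t u * σ k := by
  have hσk : σ k ≠ 0 := (map_ne_zero σ).mpr hk
  have hσ_smul : σ (t * σ k * k⁻¹) = σ t * k ^ 2 * (σ k)⁻¹ := by
    rw [map_mul, map_mul, hσ, map_inv₀]
  rw [octagonPoly, octagonPoly, hσ_smul, map_mul]
  field_simp

theorem octagon_omega_smul_general {K : Type*} [Field K]
    (σ : K →+* K) (hσ : ∀ x : K, σ (σ x) = x ^ 2)
    (ν : K → WithTop ℝ)
    (hνmul : ∀ x y : K, ν (x * y) = ν x + ν y)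
    (hνσ : ∀ x : K, ν (σ x) = (↑(Real.sqrt 2) : WithTop ℝ) * ν x) :
    ∀ t u k : K, k ≠ 0 →
      ν (σ (t * σ k * k⁻¹) * (t * σ k * k⁻¹) ^ 2 +
          (u * k) * (t * σ k * k⁻¹) + σ (u * k)) =
        ν (σ t * t ^ 2 + u * t + σ u) + (↑(Real.sqrt 2) : WithTop ℝ) * ν k := by
  intro t u k hk
  have h := octagonPoly_smul σ hσ t u hk
  unfold octagonPoly at h
  rw [h, hνmul, hνσ]

/-- Let `K` be a field of characteristic 2 with a Tits endomorphism `σ`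
(so `σ (σ x) = x²`) and a valuation `ν` satisfying `ν (σ x) = √2 · ν x`. With
`ω (t, u) := ν (σ t · t² + u · t + σ u)`, the action `(t,u) ⊙ k = (t·σ(k)·k⁻¹, u·k)` of
`k ∈ K×` satisfies `ω ((t,u) ⊙ k) = ω (t,u) + √2 · ν k`. -/
theorem octagon_omega_smul {K : Type*} [Field K] [CharP K 2]
    (σ : K →+* K) (hσ : ∀ x : K, σ (σ x) = x ^ 2)
    (ν : K → WithTop ℝ)
    (hν1 : ∀ x : K, ν x = ⊤ ↔ x = 0)
    (hνmul : ∀ x y : K, ν (x * y) = ν x + ν y)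
    (hνadd : ∀ x y : K, min (ν x) (ν y) ≤ ν (x + y))
    (hνσ : ∀ x : K, ν (σ x) = (↑(Real.sqrt 2) : WithTop ℝ) * ν x) :
    ∀ t u k : K, k ≠ 0 →
      ν (σ (t * σ k * k⁻¹) * (t * σ k * k⁻¹) ^ 2 +
          (u * k) * (t * σ k * k⁻¹) + σ (u * k)) =
        ν (σ t * t ^ 2 + u * t + σ u) + (↑(Real.sqrt 2) : WithTop ℝ) * ν k :=
  octagon_omega_smul_general σ hσ ν hνmul hνσ
end
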